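/- arXiv:2503.15188 — 3 statements merged into one kernel-verified Lean document; each statement's English description precedes it below -/
import Mathlib

section
/- Let d ∈ {1,2,3} and let W be a radial smoothing kernel in dimension d with smoothing length h > 0. Let α, β be multi-indices with |α| ≥ 3 and |β| = 1, and let x_i ≠ x_j be points of ℝ^d. Then there exists a unit multi-index β̄ with 2β̄ ≤ α + β (componentwise) such that (x_j − x_i)^α · (∇W(x_i − x_j))^β = (x_j − x_i)^{α+β−2β̄} · (x_j − x_i)^{β̄} · (∇W(x_i − x_j))^{β̄}. If moreover W satisfies the decay condition, then (x_j − x_i)^{β̄}·(∇W(x_i − x_j))^{β̄} ≥ 0 and |(x_j − x_i)^α · (∇W(x_i − x_j))^β| = |(x_j − x_i)^{α+β−2β̄}| · (x_j − x_i)^{β̄} · (∇W(x_i − x_j))^{β̄}. -/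
open scoped BigOperators RealInnerProductSpace
open Finset MeasureTheory

noncomputable section

/-- `ℝ^d` as Euclidean space. -/
abbrev Ed (d : ℕ) : Type := EuclideanSpace ℝ (Fin d)

/-- Value of the radial smoothing kernel `W(x) = (σ/h^d)·Ŵ(‖x‖/h)`,
with profile `P = Ŵ`. -/
def Wval (d : ℕ) (σ h : ℝ) (P : ℝ → ℝ) (x : Ed d) : ℝ :=
  (σ / h ^ d) * P (‖x‖ / h)

/-- Gradient of the radial smoothing kernel:
`∇W(x) = (σ/h^{d+1})·Ŵ'(‖x‖/h)·x/‖x‖` for `x ≠ 0`. -/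
def gradW (d : ℕ) (σ h : ℝ) (P : ℝ → ℝ) (x : Ed d) : Ed d :=
  ((σ / h ^ (d + 1)) * deriv P (‖x‖ / h) / ‖x‖) • x

/-- Multi-index power `v^α = v_1^{α_1}⋯v_d^{α_d}`. -/
def mpow {d : ℕ} (v : Ed d) (α : Fin d → ℕ) : ℝ := ∏ k, (v k) ^ (α k)

/-- Total degree `|α| = α_1 + ⋯ + α_d` of a multi-index. -/
def deg {d : ℕ} (α : Fin d → ℕ) : ℕ := ∑ k, α k

/-- Partial derivative along the `k`-th coordinate. -/
def pd {d : ℕ} (k : Fin d) (f : Ed d → ℝ) : Ed d → ℝ :=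
  fun x => fderiv ℝ f x (EuclideanSpace.single k 1)

/-- Mixed partial derivative `D^α f`. -/
def Dmix {d : ℕ} (α : Fin d → ℕ) (f : Ed d → ℝ) : Ed d → ℝ :=
  (List.finRange d).foldr (fun k g => (pd k)^[α k] g) f

/-- Laplacian `Δf = ∑_k ∂_k∂_k f`. -/
def lapl {d : ℕ} (f : Ed d → ℝ) : Ed d → ℝ := fun x => ∑ k, pd k (pd k f) x

/-- Variable coefficient elliptic operator `∇·(a∇f) = aΔf + ∇a·∇f`. -/
def ellip {d : ℕ} (a f : Ed d → ℝ) : Ed d → ℝ :=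
  fun x => a x * lapl f x + ∑ k, pd k a x * pd k f x

/-- The closed cube `Ω = [0,l]^d`. -/
def cube (d : ℕ) (l : ℝ) : Set (Ed d) := {x | ∀ k, x k ∈ Set.Icc 0 l}

/-- The `C^n(Ω)` norm: the max over multi-indices `α` with `|α| ≤ n` of
`sup_{x ∈ Ω} |D^α f x|`. -/
def Cnorm {d : ℕ} (n : ℕ) (f : Ed d → ℝ) (Ω : Set (Ed d)) : ℝ :=
  sSup {y : ℝ | ∃ α : Fin d → ℕ, deg α ≤ n ∧ ∃ x ∈ Ω, y = |Dmix α f x|}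

/-!
`∇W(x_i − x_j) = c • (x_j − x_i)` for a scalar `c`, which is `≥ 0` under the decay
condition, so the product equals `c · (x_j − x_i)^{α+β}`. As `|α + β| ≥ 4 > d`, some coordinate `k`
carries an exponent `≥ 2`, and `β̄ = e_k` splits off the factor `c · (x_j − x_i)_k² ≥ 0`.
-/

section MultiIndex

variable {d : ℕ}

lemma deg_add (a b : Fin d → ℕ) : deg (a + b) = deg a + deg b :=
  Finset.sum_add_distrib

lemma deg_single (k : Fin d) (n : ℕ) : deg (Pi.single k n) = n := by
  simp [deg]

lemma exists_two_le_of_lt_deg (γ : Fin d → ℕ) (hγ : d < deg γ) : ∃ k, 2 ≤ γ k := by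
  by_contra! hsmall
  have : deg γ ≤ ∑ _k : Fin d, 1 := Finset.sum_le_sum fun k _ => Nat.le_of_lt_succ (hsmall k)
  simp only [sum_const, card_univ, Fintype.card_fin, smul_eq_mul, mul_one] at this
  omega

lemma mpow_add (v : Ed d) (a b : Fin d → ℕ) : mpow v (a + b) = mpow v a * mpow v b := by
  simp only [mpow, Pi.add_apply, pow_add, prod_mul_distrib]

lemma mpow_smul (c : ℝ) (v : Ed d) (a : Fin d → ℕ) : mpow (c • v) a = c ^ deg a * mpow v a := by
  simp only [mpow, deg, PiLp.smul_apply, smul_eq_mul, mul_pow, prod_mul_distrib,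
    prod_pow_eq_pow_sum]

lemma mpow_single (v : Ed d) (k : Fin d) (n : ℕ) : mpow v (Pi.single k n) = v k ^ n := by
  rw [mpow, prod_eq_single k] <;> simp +contextual

lemma mpow_single_mul_mpow_smul_single (v : Ed d) (c : ℝ) (k : Fin d) :
    mpow v (Pi.single k 1) * mpow (c • v) (Pi.single k 1) = c * v k ^ 2 := by
  rw [mpow_smul, deg_single, mpow_single]
  ring

lemma mpow_mul_mpow_smul_eq_of_two_le (v : Ed d) (c : ℝ) {α β : Fin d → ℕ} (hβ : deg β = 1)
    {k : Fin d} (hk : 2 ≤ α k + β k) :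
    mpow v α * mpow (c • v) β
      = mpow v (fun j => α j + β j - 2 * (Pi.single k 1 : Fin d → ℕ) j) *
          (mpow v (Pi.single k 1) * mpow (c • v) (Pi.single k 1)) := by
  have hsplit :
      α + β = (fun j => α j + β j - 2 * (Pi.single k 1 : Fin d → ℕ) j) + Pi.single k 2 := by
    ext j
    rcases eq_or_ne j k with rfl | hj
    · simp only [Pi.add_apply, Pi.single_eq_same]
      omega
    · simp [hj]
  rw [mpow_single_mul_mpow_smul_single, mpow_smul, hβ, pow_one, mul_left_comm, ← mpow_add,
    hsplit, mpow_add, mpow_single]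
  ring

end MultiIndex

lemma exists_gradW_sub_eq_smul {d : ℕ} {σ h : ℝ} (P : ℝ → ℝ) (hσ : 0 ≤ σ) (hh : 0 ≤ h)
    (x y : Ed d) :
    ∃ c : ℝ, gradW d σ h P (x - y) = c • (y - x) ∧ ((∀ R : ℝ, 0 ≤ R → deriv P R ≤ 0) → 0 ≤ c) := by
  refine ⟨-(σ / h ^ (d + 1) * deriv P (‖x - y‖ / h) / ‖x - y‖), ?_, fun hdecay => ?_⟩
  · rw [gradW, neg_smul, ← smul_neg, neg_sub]
  · have hderiv := hdecay (‖x - y‖ / h) (by positivity)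
    have : 0 ≤ σ / h ^ (d + 1) := by positivity
    rw [neg_nonneg]
    exact div_nonpos_of_nonpos_of_nonneg (mul_nonpos_of_nonneg_of_nonpos this hderiv)
      (norm_nonneg _)

theorem stmt_2_general
    (d : ℕ) (hd : d = 1 ∨ d = 2 ∨ d = 3) (σ h : ℝ) (hσ : 0 < σ) (hh : 0 < h)
    (P : ℝ → ℝ)
    (α β : Fin d → ℕ) (hα : 3 ≤ deg α) (hβ : deg β = 1)
    (xi xj : Ed d) :
    ∃ βb : Fin d → ℕ, deg βb = 1 ∧ (∀ k, 2 * βb k ≤ α k + β k) ∧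
      mpow (xj - xi) α * mpow (gradW d σ h P (xi - xj)) β
        = mpow (xj - xi) (fun k => α k + β k - 2 * βb k) *
            (mpow (xj - xi) βb * mpow (gradW d σ h P (xi - xj)) βb) ∧
      ((∀ R : ℝ, 0 ≤ R → deriv P R ≤ 0) →
        0 ≤ mpow (xj - xi) βb * mpow (gradW d σ h P (xi - xj)) βb ∧
        |mpow (xj - xi) α * mpow (gradW d σ h P (xi - xj)) β|
          = |mpow (xj - xi) (fun k => α k + β k - 2 * βb k)| *
              (mpow (xj - xi) βb * mpow (gradW d σ h P (xi - xj)) βb)) := by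
  obtain ⟨k, hk⟩ : ∃ k, 2 ≤ α k + β k := by
    apply exists_two_le_of_lt_deg (α + β)
    rw [deg_add]
    omega
  obtain ⟨c, hgrad, hc⟩ := exists_gradW_sub_eq_smul P hσ.le hh.le xi xj
  have hfactor := mpow_mul_mpow_smul_eq_of_two_le (xj - xi) c hβ hk
  rw [hgrad]
  refine ⟨Pi.single k 1, deg_single k 1, fun j => ?_, hfactor, fun hdecay => ?_⟩
  · rcases eq_or_ne j k with rfl | hj
    · simpa using hk
    · simp [hj]
  · have hnonneg : 0 ≤ mpow (xj - xi) (Pi.single k 1) * mpow (c • (xj - xi)) (Pi.single k 1) := by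
      rw [mpow_single_mul_mpow_smul_single]
      exact mul_nonneg (hc hdecay) (sq_nonneg _)
    exact ⟨hnonneg, by rw [hfactor, abs_mul, abs_of_nonneg hnonneg]⟩

/-- factorization of `(x_j − x_i)^α (∇W(x_i − x_j))^β` through a
unit multi-index `β̄` with `2β̄ ≤ α + β`, for `|α| ≥ 3`, `|β| = 1`, `d ≤ 3`. -/
theorem stmt_2
    (d : ℕ) (hd : d = 1 ∨ d = 2 ∨ d = 3) (σ h : ℝ) (hσ : 0 < σ) (hh : 0 < h)
    (P : ℝ → ℝ) (hP : ContDiff ℝ 1 P)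
    (hPnn : ∀ R : ℝ, 0 ≤ R → 0 ≤ P R)
    (hPsupp : ∀ R : ℝ, 1 ≤ R → P R = 0)
    (α β : Fin d → ℕ) (hα : 3 ≤ deg α) (hβ : deg β = 1)
    (xi xj : Ed d) (hne : xi ≠ xj) :
    ∃ βb : Fin d → ℕ, deg βb = 1 ∧ (∀ k, 2 * βb k ≤ α k + β k) ∧
      mpow (xj - xi) α * mpow (gradW d σ h P (xi - xj)) β
        = mpow (xj - xi) (fun k => α k + β k - 2 * βb k) *
            (mpow (xj - xi) βb * mpow (gradW d σ h P (xi - xj)) βb) ∧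
      ((∀ R : ℝ, 0 ≤ R → deriv P R ≤ 0) →
        0 ≤ mpow (xj - xi) βb * mpow (gradW d σ h P (xi - xj)) βb ∧
        |mpow (xj - xi) α * mpow (gradW d σ h P (xi - xj)) β|
          = |mpow (xj - xi) (fun k => α k + β k - 2 * βb k)| *
              (mpow (xj - xi) βb * mpow (gradW d σ h P (xi - xj)) βb)) :=
  stmt_2_general d hd σ h hσ hh P α β hα hβ xi xj
end
end

section
/- (Gradient approximation.) There exists a constant C > 0, depending only on d, σ and sup_{R∈[0,1]}|Ŵ'(R)|, with the following property. Let d ∈ {1,2,3}, let Ω = [0,l]^d with l > 0, let 0 < h ≤ 1, and let W be a radial smoothing kernel satisfying the decay condition. Let x_i ∈ Ω, let (x_j)_{j∈J} be a finite family of points of Ω with x_j ≠ x_i for all j, and let (v_j)_{j∈J} be nonnegative weights satisfying the regularity condition: for every multi-index α with 1 ≤ |α| ≤ 2 and every unit multi-index β, |∑_{j∈J} v_j (x_j − x_i)^α (∇W(x_i − x_j))^β − γ_{α,β}| ≤ h², where γ_{α,β} = 1 if α = β and γ_{α,β} = 0 otherwise. Then for every f ∈ C³(Ω) and every unit multi-index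 β, |∑_{j∈J} v_j (f(x_j) − f(x_i)) (∇W(x_i − x_j))^β − ∂^β f(x_i)| ≤ C·h²·‖f‖_{C³(Ω)}. -/
open scoped BigOperators RealInnerProductSpace
open Finset MeasureTheory

noncomputable section

/-!
Write `u_j = x_j - x_i`. Since `W` is radial, `∇W(x_i - x_j) = w_j u_j` with a weight `w_j ≥ 0`
(the decay condition) that vanishes once `‖u_j‖ ≥ h`. Expanding `f(x_j) - f(x_i)` to second
order at `x_i`, the SPH sum becomes the first and second moments `∑ v_j u_j^α ∇W^β`, weighted by
the first and second partials of `f`, plus a Taylor remainder of size `‖u_j‖³ ‖f‖_{C³}`. The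
regularity condition pins the moments to `δ_{αβ}` up to `h²`. On the support of the weight
`‖u_j‖ < h`, so the remainder contributes at most `h² ∑ v_j w_j ‖u_j‖²`, and this sum is the
trace of the first moment matrix, hence at most `d (1 + h²)`.
-/

lemma List.foldr_replicate {α β : Type*} (F : α → β → β) (n : ℕ) (a : α) (b : β) :
    (List.replicate n a).foldr F b = (F a)^[n] b := by
  induction n with
  | zero => rfl
  | succ n ih => rw [List.replicate_succ, List.foldr_cons, ih, Function.iterate_succ_apply']

lemma abs_mul_le_of_abs_le {a b A B : ℝ} (ha : |a| ≤ A) (hb : |b| ≤ B) : |a * b| ≤ A * B :=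
  (abs_mul a b).trans_le (mul_le_mul ha hb (abs_nonneg b) ((abs_nonneg a).trans ha))

lemma abs_sum_le_card_mul {ι : Type*} [Fintype ι] {f : ι → ℝ} {B : ℝ} (hf : ∀ i, |f i| ≤ B) :
    |∑ i, f i| ≤ Fintype.card ι * B :=
  (Finset.abs_sum_le_sum_abs f _).trans <| by
    simpa using Finset.sum_le_card_nsmul Finset.univ _ B fun i _ => hf i

lemma abs_sub_taylor_two_le {φ : ℝ → ℝ} (hφ : ContDiff ℝ 3 φ) {M : ℝ}
    (hM : ∀ t ∈ Set.Icc (0 : ℝ) 1, |iteratedDeriv 3 φ t| ≤ M) :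
    |φ 1 - φ 0 - deriv φ 0 - iteratedDeriv 2 φ 0 / 2| ≤ M / 2 := by
  have hIcc : ∀ k ≤ 3, ∀ t ∈ Set.Icc (0 : ℝ) 1,
      iteratedDerivWithin k φ (Set.Icc 0 1) t = iteratedDeriv k φ t := fun k hk t ht =>
    iteratedDerivWithin_eq_iteratedDeriv (uniqueDiffOn_Icc one_pos)
      (hφ.contDiffAt.of_le (by exact_mod_cast hk)) ht
  have h0 : (0 : ℝ) ∈ Set.Icc 0 1 := Set.left_mem_Icc.2 zero_le_one
  have htaylor := taylor_mean_remainder_bound (n := 2) zero_le_one hφ.contDiffOn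
    (Set.right_mem_Icc.2 zero_le_one) fun t ht => by
      rw [hIcc 3 le_rfl t ht]; exact hM t ht
  rw [taylorWithinEval_succ, taylorWithinEval_succ, taylor_within_zero_eval,
    hIcc 1 (by norm_num) 0 h0, hIcc 2 (by norm_num) 0 h0, iteratedDeriv_one] at htaylor
  convert htaylor using 1
  · rw [Real.norm_eq_abs]; ring_nf
  · norm_num

namespace SPH

variable {d n : ℕ}

/-- Multi-indices are encoded as lists of coordinates, so that symmetry of mixed partials becomes
invariance of `List.foldr pd` under permutations. -/
def idxList (α : Fin d → ℕ) : List (Fin d) :=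
  (List.finRange d).flatMap fun k => List.replicate (α k) k

def mindexOf (L : List (Fin d)) : Fin d → ℕ := fun k => L.count k

lemma count_idxList (α : Fin d → ℕ) (k : Fin d) : (idxList α).count k = α k := by
  simp [idxList, List.count_flatMap, List.count_replicate, Function.comp_def, ← Fin.sum_univ_def]

lemma mindexOf_idxList (α : Fin d → ℕ) : mindexOf (idxList α) = α :=
  funext (count_idxList α)

lemma idxList_mindexOf_perm (L : List (Fin d)) : (idxList (mindexOf L)).Perm L :=
  List.perm_iff_count.2 fun k => count_idxList _ k

lemma length_idxList (α : Fin d → ℕ) : (idxList α).length = deg α := by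
  simp [idxList, deg, List.length_flatMap, ← Fin.sum_univ_def]

lemma deg_mindexOf (L : List (Fin d)) : deg (mindexOf L) = L.length := by
  rw [← length_idxList, (idxList_mindexOf_perm L).length_eq]

lemma mindexOf_eq_mindexOf_iff {L L' : List (Fin d)} : mindexOf L = mindexOf L' ↔ L.Perm L' := by
  rw [List.perm_iff_count, funext_iff]; rfl

lemma mpow_eq_prod_idxList (v : Ed d) (α : Fin d → ℕ) :
    mpow v α = ((idxList α).map v).prod := by
  simp [mpow, idxList, List.flatMap, List.prod_flatten, Function.comp_def,
    Fin.prod_univ_def]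

lemma mpow_mindexOf (v : Ed d) (L : List (Fin d)) : mpow v (mindexOf L) = (L.map v).prod := by
  rw [mpow_eq_prod_idxList, ((idxList_mindexOf_perm L).map v).prod_eq]

lemma Dmix_eq_foldr_idxList (α : Fin d → ℕ) (f : Ed d → ℝ) :
    Dmix α f = (idxList α).foldr pd f := by
  simp only [Dmix, idxList, List.foldr_flatMap, List.foldr_replicate]

lemma exists_eq_mindexOf_singleton {β : Fin d → ℕ} (hβ : deg β = 1) :
    ∃ k, β = mindexOf [k] := by
  obtain ⟨k, hk⟩ := List.length_eq_one_iff.1 ((length_idxList β).trans hβ)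
  exact ⟨k, by rw [← hk, mindexOf_idxList]⟩

lemma Dmix_mindexOf_singleton (k : Fin d) (f : Ed d → ℝ) : Dmix (mindexOf [k]) f = pd k f := by
  rw [Dmix_eq_foldr_idxList, List.perm_singleton.1 (idxList_mindexOf_perm [k])]
  rfl

lemma contDiff_pd {r : WithTop ℕ∞} {g : Ed d → ℝ} (hg : ContDiff ℝ (r + 1) g) (k : Fin d) :
    ContDiff ℝ r (pd k g) :=
  (hg.fderiv_right le_rfl).clm_apply contDiff_const

lemma contDiff_foldr_pd {f : Ed d → ℝ} (L : List (Fin d)) {m : ℕ}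
    (hf : ContDiff ℝ (m + L.length : ℕ) f) : ContDiff ℝ m (L.foldr pd f) := by
  induction L generalizing m with
  | nil => simpa using hf
  | cons k L ih =>
    refine contDiff_pd (ih ?_) k
    simpa [add_assoc, add_comm 1] using hf

lemma pd_comm {g : Ed d → ℝ} (hg : ContDiff ℝ 2 g) (m k : Fin d) :
    pd m (pd k g) = pd k (pd m g) := by
  have hdiff : Differentiable ℝ (fderiv ℝ g) :=
    (hg.fderiv_right (by norm_num)).differentiable one_ne_zero
  have hpd2 : ∀ a b : Fin d, pd a (pd b g) = fun y =>
      fderiv ℝ (fderiv ℝ g) y (EuclideanSpace.single a 1) (EuclideanSpace.single b 1) := by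
    intro a b
    funext y
    change fderiv ℝ (fun z => fderiv ℝ g z (EuclideanSpace.single b 1)) y _ = _
    simp [fderiv_clm_apply (hdiff y) (differentiableAt_const _)]
  rw [hpd2, hpd2]
  funext y
  exact hg.contDiffAt.isSymmSndFDerivAt (by simp) _ _

lemma foldr_pd_eq_of_perm {f : Ed d → ℝ} {L L' : List (Fin d)} (hLL' : L.Perm L')
    (hf : ContDiff ℝ L.length f) : L.foldr pd f = L'.foldr pd f := by
  induction hLL' with
  | nil => rfl
  | cons k _ ih =>
    rw [List.foldr_cons, List.foldr_cons, ih (hf.of_le (by simp))]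
  | swap a b L =>
    exact pd_comm (contDiff_foldr_pd L (hf.of_le (by
      simp only [List.length_cons, Nat.cast_add, Nat.cast_one]; norm_cast; omega))) b a
  | trans h₁₂ _ ih₁₂ ih₂₃ => rw [ih₁₂ hf, ih₂₃ (h₁₂.length_eq ▸ hf)]

lemma continuous_Dmix {f : Ed d → ℝ} {r : ℕ} (hf : ContDiff ℝ r f) {α : Fin d → ℕ}
    (hα : deg α ≤ r) : Continuous (Dmix α f) := by
  rw [Dmix_eq_foldr_idxList]
  exact (contDiff_foldr_pd (m := 0) _ (hf.of_le (by simpa [length_idxList] using hα))).continuous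

lemma bddAbove_Cnorm {f : Ed d → ℝ} {r : ℕ} {Ω : Set (Ed d)} (hΩ : IsCompact Ω)
    (hf : ContDiff ℝ r f) :
    BddAbove {y : ℝ | ∃ α : Fin d → ℕ, deg α ≤ r ∧ ∃ x ∈ Ω, y = |Dmix α f x|} := by
  have hfin : {α : Fin d → ℕ | deg α ≤ r}.Finite := by
    refine (Set.Finite.pi (t := fun _ => Set.Iic r) fun _ => Set.finite_Iic r).subset ?_
    intro α hα k _
    exact (Finset.single_le_sum (fun i _ => Nat.zero_le (α i)) (Finset.mem_univ k)).trans hα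
  refine ((hfin.bddAbove_biUnion).2 fun α hα =>
    hΩ.bddAbove_image (continuous_Dmix hf hα).abs.continuousOn).mono ?_
  rintro y ⟨α, hα, x, hx, rfl⟩
  exact Set.mem_biUnion hα ⟨x, hx, rfl⟩

lemma Cnorm_nonneg (r : ℕ) (f : Ed d → ℝ) (Ω : Set (Ed d)) : 0 ≤ Cnorm r f Ω :=
  Real.sSup_nonneg fun _ ⟨_, _, _, _, hy⟩ => hy ▸ abs_nonneg _

lemma abs_foldr_pd_le_Cnorm {f : Ed d → ℝ} {r : ℕ} {Ω : Set (Ed d)} (hΩ : IsCompact Ω)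
    (hf : ContDiff ℝ r f) {L : List (Fin d)} (hL : L.length ≤ r) {x : Ed d} (hx : x ∈ Ω) :
    |L.foldr pd f x| ≤ Cnorm r f Ω := by
  have hperm := idxList_mindexOf_perm L
  rw [← foldr_pd_eq_of_perm hperm (hf.of_le (by simpa [hperm.length_eq] using hL)),
    ← Dmix_eq_foldr_idxList]
  exact le_csSup (bddAbove_Cnorm hΩ hf) ⟨_, (deg_mindexOf L).trans_le hL, x, hx, rfl⟩

lemma isCompact_cube (d : ℕ) (l : ℝ) : IsCompact (cube d l) := by
  have : cube d l = EuclideanSpace.equiv (Fin d) ℝ ⁻¹' Set.univ.pi fun _ => Set.Icc 0 l := by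
    ext x; simp only [cube, Set.mem_preimage, Set.mem_univ_pi]; rfl
  rw [this]
  exact (EuclideanSpace.equiv (Fin d) ℝ).toHomeomorph.isCompact_preimage.2
    (isCompact_univ_pi fun _ => isCompact_Icc)

lemma convex_cube (d : ℕ) (l : ℝ) : Convex ℝ (cube d l) := by
  intro x hx y hy a b ha hb hab k
  obtain ⟨hx0, hxl⟩ := hx k
  obtain ⟨hy0, hyl⟩ := hy k
  simp only [PiLp.add_apply, PiLp.smul_apply, smul_eq_mul, Set.mem_Icc]
  constructor <;> nlinarith

lemma fderiv_apply_eq_sum_pd (g : Ed d → ℝ) (z u : Ed d) :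
    fderiv ℝ g z u = ∑ m, u m * pd m g z := by
  conv_lhs => rw [← (EuclideanSpace.basisFun (Fin d) ℝ).sum_repr u]
  simp [map_sum, pd, EuclideanSpace.basisFun_apply]

lemma hasDerivAt_comp_line {g : Ed d → ℝ} (hg : Differentiable ℝ g) (y u : Ed d) (t : ℝ) :
    HasDerivAt (fun s : ℝ => g (y + s • u)) (∑ m, u m * pd m g (y + t • u)) t := by
  have hline : HasDerivAt (fun s : ℝ => y + s • u) u t := by
    simpa using ((hasDerivAt_id t).smul_const u).const_add y
  rw [← fderiv_apply_eq_sum_pd]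
  exact (hg _).hasFDerivAt.comp_hasDerivAt t hline

lemma abs_sub_taylor_two_coord_le {f : Ed d → ℝ} (hf : ContDiff ℝ 3 f) (y u : Ed d) {M : ℝ}
    (hM : ∀ t ∈ Set.Icc (0 : ℝ) 1,
      |∑ m, u m * ∑ p, u p * ∑ q, u q * pd q (pd p (pd m f)) (y + t • u)| ≤ M) :
    |f (y + u) - f y - ∑ m, u m * pd m f y
      - (∑ m, u m * ∑ p, u p * pd p (pd m f) y) / 2| ≤ M / 2 := by
  have hf1 : ∀ m, ContDiff ℝ 2 (pd m f) := fun m => contDiff_pd hf m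
  have hf2 : ∀ m p, ContDiff ℝ 1 (pd p (pd m f)) := fun m p => contDiff_pd (hf1 m) p
  have hd1 : ∀ t, HasDerivAt (fun s : ℝ => f (y + s • u))
      (∑ m, u m * pd m f (y + t • u)) t :=
    hasDerivAt_comp_line (hf.differentiable (by norm_num)) y u
  have hd2 : ∀ t, HasDerivAt (fun s : ℝ => ∑ m, u m * pd m f (y + s • u))
      (∑ m, u m * ∑ p, u p * pd p (pd m f) (y + t • u)) t := fun t =>
    HasDerivAt.fun_sum fun m _ =>
      (hasDerivAt_comp_line ((hf1 m).differentiable (by norm_num)) y u t).const_mul (u m)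
  have hd3 : ∀ t, HasDerivAt (fun s : ℝ => ∑ m, u m * ∑ p, u p * pd p (pd m f) (y + s • u))
      (∑ m, u m * ∑ p, u p * ∑ q, u q * pd q (pd p (pd m f)) (y + t • u)) t := fun t =>
    HasDerivAt.fun_sum fun m _ => (HasDerivAt.fun_sum fun p _ =>
      (hasDerivAt_comp_line ((hf2 m p).differentiable (by norm_num)) y u t).const_mul
        (u p)).const_mul (u m)
  have e1 := funext fun t => (hd1 t).deriv
  have e2 : iteratedDeriv 2 (fun s : ℝ => f (y + s • u)) =
      fun t => ∑ m, u m * ∑ p, u p * pd p (pd m f) (y + t • u) := by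
    rw [iteratedDeriv_succ, iteratedDeriv_one, e1]; exact funext fun t => (hd2 t).deriv
  have e3 : iteratedDeriv 3 (fun s : ℝ => f (y + s • u)) =
      fun t => ∑ m, u m * ∑ p, u p * ∑ q, u q * pd q (pd p (pd m f)) (y + t • u) := by
    rw [iteratedDeriv_succ, e2]; exact funext fun t => (hd3 t).deriv
  have hline : ContDiff ℝ 3 fun s : ℝ => f (y + s • u) :=
    hf.comp (contDiff_const.add (contDiff_id.smul contDiff_const))
  have := abs_sub_taylor_two_le hline (M := M) fun t ht => by rw [e3]; exact hM t ht
  simpa [e1, e2] using this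

lemma abs_cubic_form_le (u : Ed d) {T : Fin d → Fin d → Fin d → ℝ} {N : ℝ}
    (hT : ∀ m p q, |T m p q| ≤ N) :
    |∑ m, u m * ∑ p, u p * ∑ q, u q * T m p q| ≤ d ^ 3 * N * ‖u‖ ^ 3 := by
  have hu : ∀ m, |u m| ≤ ‖u‖ := PiLp.norm_apply_le u
  have := abs_sum_le_card_mul fun m => abs_mul_le_of_abs_le (hu m) <|
    abs_sum_le_card_mul fun p => abs_mul_le_of_abs_le (hu p) <|
      abs_sum_le_card_mul fun q => abs_mul_le_of_abs_le (hu q) (hT m p q)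
  simp only [Fintype.card_fin] at this
  linarith

lemma abs_sub_taylor_two_le_of_convex {Ω : Set (Ed d)} (hΩ : Convex ℝ Ω) {f : Ed d → ℝ}
    (hf : ContDiff ℝ 3 f) {N : ℝ} (h3 : ∀ m p q, ∀ z ∈ Ω, |pd q (pd p (pd m f)) z| ≤ N)
    {y u : Ed d} (hy : y ∈ Ω) (hyu : y + u ∈ Ω) :
    |f (y + u) - f y - ∑ m, u m * pd m f y
      - (∑ m, u m * ∑ p, u p * pd p (pd m f) y) / 2| ≤ d ^ 3 * N / 2 * ‖u‖ ^ 3 := by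
  refine (abs_sub_taylor_two_coord_le hf y u fun t ht => abs_cubic_form_le u fun m p q =>
    h3 m p q _ ?_).trans_eq (by ring)
  simpa using hΩ.add_smul_sub_mem hy hyu ht

def kernelGradCoeff (d : ℕ) (σ h : ℝ) (P : ℝ → ℝ) (r : ℝ) : ℝ :=
  -(σ / h ^ (d + 1) * deriv P (r / h) / r)

lemma gradW_sub_eq_smul (σ h : ℝ) (P : ℝ → ℝ) (x y : Ed d) :
    gradW d σ h P (y - x) = kernelGradCoeff d σ h P ‖x - y‖ • (x - y) := by
  rw [gradW, kernelGradCoeff, ← neg_sub x y, norm_neg, neg_smul, smul_neg]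

lemma kernelGradCoeff_nonneg {σ h : ℝ} {P : ℝ → ℝ} (hσ : 0 ≤ σ) (hh : 0 ≤ h)
    (hdec : ∀ R : ℝ, 0 ≤ R → deriv P R ≤ 0) {r : ℝ} (hr : 0 ≤ r) :
    0 ≤ kernelGradCoeff d σ h P r := by
  rw [kernelGradCoeff, neg_nonneg]
  exact div_nonpos_of_nonpos_of_nonneg
    (mul_nonpos_of_nonneg_of_nonpos (by positivity) (hdec _ (by positivity))) hr

lemma kernelGradCoeff_eq_zero {σ h : ℝ} {P : ℝ → ℝ} (hPnn : ∀ R : ℝ, 0 ≤ R → 0 ≤ P R)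
    (hPsupp : ∀ R : ℝ, 1 ≤ R → P R = 0) (hh : 0 < h) {r : ℝ} (hr : h ≤ r) :
    kernelGradCoeff d σ h P r = 0 := by
  have hR : 1 ≤ r / h := (one_le_div hh).2 hr
  have hmin : IsLocalMin P (r / h) := by
    filter_upwards [eventually_gt_nhds (by linarith : (0 : ℝ) < r / h)] with y hy
    rw [hPsupp _ hR]
    exact hPnn y hy.le
  simp [kernelGradCoeff, hmin.deriv_eq_zero]

def RegularityCondition {n : ℕ} (v : Fin n → ℝ) (u G : Fin n → Ed d) (ε : ℝ) : Prop :=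
  ∀ α : Fin d → ℕ, 1 ≤ deg α → deg α ≤ 2 → ∀ β : Fin d → ℕ, deg β = 1 →
    |∑ j, v j * mpow (u j) α * mpow (G j) β - (if α = β then (1 : ℝ) else 0)| ≤ ε

namespace RegularityCondition

variable {n : ℕ} {v : Fin n → ℝ} {u G : Fin n → Ed d} {ε : ℝ}

lemma abs_first_moment_sub_le (hreg : RegularityCondition v u G ε) (m k : Fin d) :
    |∑ j, v j * u j m * G j k - (if m = k then (1 : ℝ) else 0)| ≤ ε := by
  simpa [mpow_mindexOf, mindexOf_eq_mindexOf_iff] using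
    hreg (mindexOf [m]) (by simp [deg_mindexOf]) (by simp [deg_mindexOf]) (mindexOf [k])
      (by simp [deg_mindexOf])

lemma abs_second_moment_le (hreg : RegularityCondition v u G ε) (m p k : Fin d) :
    |∑ j, v j * (u j m * u j p) * G j k| ≤ ε := by
  have hne : mindexOf [m, p] ≠ mindexOf [k] := fun h => by
    simpa [deg_mindexOf] using congrArg deg h
  simpa [mpow_mindexOf, hne] using
    hreg (mindexOf [m, p]) (by simp [deg_mindexOf]) (by simp [deg_mindexOf]) (mindexOf [k])
      (by simp [deg_mindexOf])

end RegularityCondition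

lemma sum_mul_linear_form (v G : Fin n → ℝ) (u : Fin n → Ed d) (a : Fin d → ℝ) :
    ∑ j, v j * (∑ m, u j m * a m) * G j = ∑ m, a m * ∑ j, v j * u j m * G j := by
  simp only [Finset.mul_sum, Finset.sum_mul]
  rw [Finset.sum_comm]
  exact Finset.sum_congr rfl fun m _ => Finset.sum_congr rfl fun j _ => by ring

lemma sum_mul_quadratic_form (v G : Fin n → ℝ) (u : Fin n → Ed d) (H : Fin d → Fin d → ℝ) :
    ∑ j, v j * (∑ m, u j m * ∑ p, u j p * H m p) * G j
      = ∑ m, ∑ p, H m p * ∑ j, v j * (u j m * u j p) * G j := by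
  simp only [Finset.mul_sum, Finset.sum_mul]
  rw [Finset.sum_comm]
  refine Finset.sum_congr rfl fun m _ => ?_
  rw [Finset.sum_comm]
  exact Finset.sum_congr rfl fun p _ => Finset.sum_congr rfl fun j _ => by ring

lemma abs_sum_remainder_le {v w r : Fin n → ℝ} {u : Fin n → Ed d} {h K : ℝ}
    (hv : ∀ j, 0 ≤ v j) (hw : ∀ j, 0 ≤ w j) (hwh : ∀ j, h ≤ ‖u j‖ → w j = 0) (hK : 0 ≤ K)
    (hr : ∀ j, |r j| ≤ K * ‖u j‖ ^ 3) (k : Fin d) :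
    |∑ j, v j * r j * (w j * u j k)| ≤ K * h ^ 2 * ∑ j, v j * w j * ‖u j‖ ^ 2 := by
  rw [Finset.mul_sum]
  refine (Finset.abs_sum_le_sum_abs _ _).trans (Finset.sum_le_sum fun j _ => ?_)
  rcases le_or_gt h ‖u j‖ with hfar | hnear
  · simp [hwh j hfar]
  · -- inside the support, two of the four powers of `‖u j‖` are traded for `h ^ 2`
    have hvw := mul_nonneg (hv j) (hw j)
    have huk : |u j k| ≤ ‖u j‖ := PiLp.norm_apply_le (u j) k
    have hsq : ‖u j‖ ^ 2 ≤ h ^ 2 := pow_le_pow_left₀ (norm_nonneg _) hnear.le 2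
    calc |v j * r j * (w j * u j k)| = v j * w j * (|r j| * |u j k|) := by
          rw [abs_mul, abs_mul, abs_mul, abs_of_nonneg (hv j), abs_of_nonneg (hw j)]; ring
      _ ≤ v j * w j * (K * ‖u j‖ ^ 3 * ‖u j‖) := by gcongr; exact hr j
      _ = K * ‖u j‖ ^ 2 * (v j * w j * ‖u j‖ ^ 2) := by ring
      _ ≤ K * h ^ 2 * (v j * w j * ‖u j‖ ^ 2) := by gcongr

lemma sum_weight_mul_norm_sq_le {v w : Fin n → ℝ} {u G : Fin n → Ed d} {ε : ℝ}
    (hG : ∀ j, G j = w j • u j) (hreg : RegularityCondition v u G ε) :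
    ∑ j, v j * w j * ‖u j‖ ^ 2 ≤ d * (1 + ε) := by
  have hdiag : ∀ m, ∑ j, v j * u j m * G j m ≤ 1 + ε := fun m => by
    have := hreg.abs_first_moment_sub_le m m
    rw [if_pos rfl] at this
    linarith [le_abs_self (∑ j, v j * u j m * G j m - 1)]
  calc ∑ j, v j * w j * ‖u j‖ ^ 2 = ∑ m, ∑ j, v j * u j m * G j m := by
        simp only [EuclideanSpace.real_norm_sq_eq, hG, Finset.mul_sum]
        rw [Finset.sum_comm]
        exact Finset.sum_congr rfl fun m _ => Finset.sum_congr rfl fun j _ => by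
          simp only [PiLp.smul_apply, smul_eq_mul]; ring
    _ ≤ ∑ _m : Fin d, (1 + ε) := Finset.sum_le_sum fun m _ => hdiag m
    _ = d * (1 + ε) := by
        simp only [Finset.sum_const, Finset.card_univ, Fintype.card_fin, nsmul_eq_mul]

theorem abs_sum_sub_le_of_regularity {v w g : Fin n → ℝ} {u G : Fin n → Ed d}
    {a : Fin d → ℝ} {H : Fin d → Fin d → ℝ} {h N K : ℝ}
    (hv : ∀ j, 0 ≤ v j) (hw : ∀ j, 0 ≤ w j) (hwh : ∀ j, h ≤ ‖u j‖ → w j = 0)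
    (hG : ∀ j, G j = w j • u j) (hreg : RegularityCondition v u G (h ^ 2))
    (ha : ∀ m, |a m| ≤ N) (hH : ∀ m p, |H m p| ≤ N) (hK : 0 ≤ K)
    (hg : ∀ j, |g j - ∑ m, u j m * a m - (∑ m, u j m * ∑ p, u j p * H m p) / 2|
      ≤ K * ‖u j‖ ^ 3) (k : Fin d) :
    |∑ j, v j * g j * G j k - a k|
      ≤ (d * N + d ^ 2 * N / 2 + d * (1 + h ^ 2) * K) * h ^ 2 := by
  set r : Fin n → ℝ := fun j =>
    g j - ∑ m, u j m * a m - (∑ m, u j m * ∑ p, u j p * H m p) / 2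
  set S₁ : Fin d → ℝ := fun m => ∑ j, v j * u j m * G j k - if m = k then 1 else 0
  set S₂ : Fin d → Fin d → ℝ := fun m p => ∑ j, v j * (u j m * u j p) * G j k
  have hsplit : ∑ j, v j * g j * G j k - a k
      = ∑ m, a m * S₁ m + (∑ m, ∑ p, H m p * S₂ m p) / 2 + ∑ j, v j * r j * (w j * u j k) := by
    have hterm : ∀ j, v j * g j * G j k = v j * (∑ m, u j m * a m) * G j k
        + v j * (∑ m, u j m * ∑ p, u j p * H m p) * G j k / 2 + v j * r j * (w j * u j k) := by
      intro j; simp only [r, hG, PiLp.smul_apply, smul_eq_mul]; ring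
    rw [Finset.sum_congr rfl fun j _ => hterm j, Finset.sum_add_distrib, Finset.sum_add_distrib,
      ← Finset.sum_div, sum_mul_linear_form, sum_mul_quadratic_form]
    simp only [S₁, S₂, mul_sub, Finset.sum_sub_distrib, mul_ite, mul_one, mul_zero,
      Finset.sum_ite_eq', Finset.mem_univ, if_true]
    ring
  have hlin : |∑ m, a m * S₁ m| ≤ d * (N * h ^ 2) := by
    simpa using abs_sum_le_card_mul fun m =>
      abs_mul_le_of_abs_le (ha m) (hreg.abs_first_moment_sub_le m k)
  have hquad : |∑ m, ∑ p, H m p * S₂ m p| ≤ d * (d * (N * h ^ 2)) := by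
    simpa using abs_sum_le_card_mul fun m => abs_sum_le_card_mul fun p =>
      abs_mul_le_of_abs_le (hH m p) (hreg.abs_second_moment_le m p k)
  have hrem : |∑ j, v j * r j * (w j * u j k)| ≤ K * h ^ 2 * (d * (1 + h ^ 2)) :=
    (abs_sum_remainder_le hv hw hwh hK hg k).trans <| by
      gcongr; exact sum_weight_mul_norm_sq_le hG hreg
  rw [hsplit]
  calc _ ≤ |∑ m, a m * S₁ m| + |∑ m, ∑ p, H m p * S₂ m p| / 2
        + |∑ j, v j * r j * (w j * u j k)| := by
        refine (abs_add_le _ _).trans (add_le_add_left ((abs_add_le _ _).trans ?_) _)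
        rw [abs_div, abs_two]
    _ ≤ _ := by linarith

end SPH

open SPH in
theorem stmt_3_general
    (d : ℕ) (σ : ℝ) (hσ : 0 < σ)
    (P : ℝ → ℝ)
    (hPnn : ∀ R : ℝ, 0 ≤ R → 0 ≤ P R)
    (hPsupp : ∀ R : ℝ, 1 ≤ R → P R = 0)
    (hdec : ∀ R : ℝ, 0 ≤ R → deriv P R ≤ 0) :
    ∃ C > 0, ∀ (l : ℝ), 0 < l → ∀ (h : ℝ), 0 < h → h ≤ 1 →
      ∀ (xi : Ed d), xi ∈ cube d l →
      ∀ (n : ℕ) (x : Fin n → Ed d) (v : Fin n → ℝ),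
        (∀ j, x j ∈ cube d l) →
        (∀ j, x j ≠ xi) →
        (∀ j, 0 ≤ v j) →
        (∀ α : Fin d → ℕ, 1 ≤ deg α → deg α ≤ 2 →
          ∀ β : Fin d → ℕ, deg β = 1 →
            |∑ j, v j * mpow (x j - xi) α * mpow (gradW d σ h P (xi - x j)) β
              - (if α = β then (1 : ℝ) else 0)| ≤ h ^ 2) →
        ∀ f : Ed d → ℝ, ContDiff ℝ 3 f →
          ∀ β : Fin d → ℕ, deg β = 1 →
            |∑ j, v j * (f (x j) - f xi) * mpow (gradW d σ h P (xi - x j)) β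
              - Dmix β f xi| ≤ C * h ^ 2 * Cnorm 3 f (cube d l) := by
  refine ⟨d ^ 4 + d ^ 2 + d + 1, by positivity, ?_⟩
  intro l _ h hh hh1 xi hxi n x v hx _ hv hreg f hf β hβ
  obtain ⟨k, rfl⟩ := exists_eq_mindexOf_singleton hβ
  set N := Cnorm 3 f (cube d l)
  have hN : 0 ≤ N := Cnorm_nonneg 3 f _
  have hbound : ∀ L : List (Fin d), L.length ≤ 3 → ∀ y ∈ cube d l, |L.foldr pd f y| ≤ N :=
    fun L hL y hy => abs_foldr_pd_le_Cnorm (isCompact_cube d l) hf hL hy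
  have hest := abs_sum_sub_le_of_regularity (u := fun j => x j - xi)
    (w := fun j => kernelGradCoeff d σ h P ‖x j - xi‖) (K := d ^ 3 * N / 2) hv
    (fun j => kernelGradCoeff_nonneg hσ.le hh.le hdec (norm_nonneg _))
    (fun j => kernelGradCoeff_eq_zero hPnn hPsupp hh) (fun j => gradW_sub_eq_smul σ h P (x j) xi) hreg
    (fun m => hbound [m] (by simp) xi hxi) (fun m p => hbound [p, m] (by simp) xi hxi)
    (by positivity)
    (fun j => by
      simpa using abs_sub_taylor_two_le_of_convex (convex_cube d l) hf
        (fun m p q => hbound [q, p, m] (by simp)) hxi (u := x j - xi) (by simpa using hx j)) k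
  simp only [mpow_mindexOf, Dmix_mindexOf_singleton, List.map_cons, List.map_nil,
    List.prod_cons, List.prod_nil, mul_one]
  refine hest.trans ?_
  have hslack : 0 ≤ 1 - h ^ 2 := sub_nonneg.2 (pow_le_one₀ hh.le hh1)
  have : 0 ≤ h ^ 2 * N * ((d : ℝ) ^ 4 * (1 - h ^ 2) / 2 + d ^ 2 / 2 + 1) := by positivity
  linarith

/-- Gradient approximation: second-order accuracy of the SPH
gradient approximation under the regularity conditions. -/
theorem stmt_3
    (d : ℕ) (hd : d = 1 ∨ d = 2 ∨ d = 3) (σ : ℝ) (hσ : 0 < σ)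
    (P : ℝ → ℝ) (hP : ContDiff ℝ 1 P)
    (hPnn : ∀ R : ℝ, 0 ≤ R → 0 ≤ P R)
    (hPsupp : ∀ R : ℝ, 1 ≤ R → P R = 0)
    (hdec : ∀ R : ℝ, 0 ≤ R → deriv P R ≤ 0) :
    ∃ C > 0, ∀ (l : ℝ), 0 < l → ∀ (h : ℝ), 0 < h → h ≤ 1 →
      ∀ (xi : Ed d), xi ∈ cube d l →
      ∀ (n : ℕ) (x : Fin n → Ed d) (v : Fin n → ℝ),
        (∀ j, x j ∈ cube d l) →
        (∀ j, x j ≠ xi) →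
        (∀ j, 0 ≤ v j) →
        (∀ α : Fin d → ℕ, 1 ≤ deg α → deg α ≤ 2 →
          ∀ β : Fin d → ℕ, deg β = 1 →
            |∑ j, v j * mpow (x j - xi) α * mpow (gradW d σ h P (xi - x j)) β
              - (if α = β then (1 : ℝ) else 0)| ≤ h ^ 2) →
        ∀ f : Ed d → ℝ, ContDiff ℝ 3 f →
          ∀ β : Fin d → ℕ, deg β = 1 →
            |∑ j, v j * (f (x j) - f xi) * mpow (gradW d σ h P (xi - x j)) β
              - Dmix β f xi| ≤ C * h ^ 2 * Cnorm 3 f (cube d l) :=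
  stmt_3_general d σ hσ P hPnn hPsupp hdec
end
end

section
/- (Barrier comparison.) In the particle setting, assume the system is connected to the boundary. Let w = (w_1,…,w_N) be a grid function with w_i ≥ 0 for all 1 ≤ i ≤ N and ℒ_h w_i ≥ 1 for every interior index i. If U = (U_1,…,U_N) satisfies ℒ_h U_i = f_i for every interior index i and U_i = 0 for every boundary index i, then max_{1≤i≤N} |U_i| ≤ (max_{N_in < i ≤ N} w_i) · (max_{1≤i≤N_in} |f_i|). -/
open scoped BigOperators RealInnerProductSpace
open Finset MeasureTheory

noncomputable section

/-- Coefficient `c_{i,j} = −V_{i,j}(a_i+a_j)((x_i−x_j)·∇W(x_i−x_j))/‖x_i−x_j‖²`. -/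
def cSPH (d N : ℕ) (σ h : ℝ) (P : ℝ → ℝ) (x : Fin N → Ed d)
    (a : Fin N → ℝ) (V : Fin N → Fin N → ℝ) (i j : Fin N) : ℝ :=
  -(V i j * ((a i + a j) *
      (⟪x i - x j, gradW d σ h P (x i - x j)⟫ / ‖x i - x j‖ ^ 2)))

/-- Discrete operator `ℒ_h U i = ∑_{j ≠ i} c_{i,j}(U_j − U_i)`. -/
def Lh (d N : ℕ) (σ h : ℝ) (P : ℝ → ℝ) (x : Fin N → Ed d)
    (a : Fin N → ℝ) (V : Fin N → Fin N → ℝ) (U : Fin N → ℝ) (i : Fin N) : ℝ :=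
  ∑ j ∈ Finset.univ.erase i, cSPH d N σ h P x a V i j * (U j - U i)

/-- The particle system is connected to the boundary: from every interior
index there is a chain of positive coefficients, through interior indices,
reaching a boundary index. -/
def ConnBd (Nin : ℕ) {N : ℕ} (c : Fin N → Fin N → ℝ) : Prop :=
  ∀ i : Fin N, (i : ℕ) < Nin →
    ∃ (m : ℕ) (p : Fin (m + 1) → Fin N),
      p 0 = i ∧ Nin ≤ (p (Fin.last m) : ℕ) ∧
      (∀ k : Fin m, (p k.castSucc : ℕ) < Nin) ∧
      (∀ k : Fin m, 0 < c (p k.castSucc) (p k.succ))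

/-!
Write `F = max |f|` over interior indices and `B = max w` over boundary indices. Since
`ℒ_h (±U + F w) ≥ -F + F = 0` at every interior index, the discrete maximum principle puts the
maximum of `±U + F w` at a boundary index, where it is `F w ≤ F B`; as `F w ≥ 0`, `±U ≤ F B`.
The maximum principle itself holds because the coefficients are nonnegative: at an interior
maximum `i` with `ℒ g i ≥ 0` every term `c i j (g j - g i)` vanishes, so the maximum spreads along
positive coefficients, and connectedness carries it to the boundary.
-/

def diffOp {N : ℕ} (c : Fin N → Fin N → ℝ) (g : Fin N → ℝ) (i : Fin N) : ℝ :=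
  ∑ j ∈ univ.erase i, c i j * (g j - g i)

theorem Lh_eq_diffOp (d N : ℕ) (σ h : ℝ) (P : ℝ → ℝ) (x : Fin N → Ed d) (a : Fin N → ℝ)
    (V : Fin N → Fin N → ℝ) (U : Fin N → ℝ) (i : Fin N) :
    Lh d N σ h P x a V U i = diffOp (cSPH d N σ h P x a V) U i :=
  rfl

section MaximumPrinciple

variable {N Nin : ℕ} {c : Fin N → Fin N → ℝ}

theorem diffOp_add (g₁ g₂ : Fin N → ℝ) (i : Fin N) :
    diffOp c (g₁ + g₂) i = diffOp c g₁ i + diffOp c g₂ i := by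
  simp only [diffOp, ← sum_add_distrib, Pi.add_apply]
  exact sum_congr rfl fun j _ => by ring

theorem diffOp_smul (s : ℝ) (g : Fin N → ℝ) (i : Fin N) :
    diffOp c (s • g) i = s * diffOp c g i := by
  simp only [diffOp, mul_sum, Pi.smul_apply, smul_eq_mul]
  exact sum_congr rfl fun j _ => by ring

theorem diffOp_neg (g : Fin N → ℝ) (i : Fin N) : diffOp c (-g) i = -diffOp c g i := by
  simp only [diffOp, ← sum_neg_distrib, Pi.neg_apply]
  exact sum_congr rfl fun j _ => by ring

theorem eq_of_isMax_of_diffOp_nonneg {g : Fin N → ℝ} {i j : Fin N}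
    (hc : ∀ k, k ≠ i → 0 ≤ c i k) (hmax : ∀ k, g k ≤ g i) (hg : 0 ≤ diffOp c g i)
    (hcij : 0 < c i j) : g j = g i := by
  obtain rfl | hji := eq_or_ne j i
  · rfl
  have hterms : ∀ k ∈ univ.erase i, c i k * (g k - g i) ≤ 0 := fun k hk =>
    mul_nonpos_of_nonneg_of_nonpos (hc k (mem_erase.1 hk).1) (sub_nonpos.2 (hmax k))
  have hsum : diffOp c g i = 0 := le_antisymm (sum_nonpos hterms) hg
  have hj : c i j * (g j - g i) = 0 :=
    (sum_eq_zero_iff_of_nonpos hterms).1 hsum j (mem_erase.2 ⟨hji, mem_univ j⟩)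
  exact sub_eq_zero.1 ((mul_eq_zero.1 hj).resolve_left hcij.ne')

theorem exists_boundary_isMax [Nonempty (Fin N)] {g : Fin N → ℝ}
    (hc : ∀ i j : Fin N, (i : ℕ) < Nin → j ≠ i → 0 ≤ c i j) (hconn : ConnBd Nin c)
    (hg : ∀ i : Fin N, (i : ℕ) < Nin → 0 ≤ diffOp c g i) :
    ∃ j : Fin N, Nin ≤ (j : ℕ) ∧ ∀ i, g i ≤ g j := by
  obtain ⟨i₀, -, hmax⟩ := exists_max_image univ g univ_nonempty
  replace hmax : ∀ i, g i ≤ g i₀ := fun i => hmax i (mem_univ i)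
  by_cases hi₀ : Nin ≤ (i₀ : ℕ)
  · exact ⟨i₀, hi₀, hmax⟩
  obtain ⟨m, p, hp0, hlast, hint, hpos⟩ := hconn i₀ (not_le.1 hi₀)
  have hchain : ∀ k, g (p k) = g i₀ := by
    refine Fin.induction (by rw [hp0]) fun k hk => ?_
    rw [← hk] at hmax ⊢
    exact eq_of_isMax_of_diffOp_nonneg (hc _ · (hint k)) hmax (hg _ (hint k)) (hpos k)
  exact ⟨p (Fin.last m), hlast, fun i => (hchain _).symm ▸ hmax i⟩

theorem le_mul_of_barrier [Nonempty (Fin N)] {U w : Fin N → ℝ} {B F : ℝ}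
    (hc : ∀ i j : Fin N, (i : ℕ) < Nin → j ≠ i → 0 ≤ c i j) (hconn : ConnBd Nin c)
    (hw : ∀ i, 0 ≤ w i) (hLw : ∀ i : Fin N, (i : ℕ) < Nin → 1 ≤ diffOp c w i)
    (hwB : ∀ j : Fin N, Nin ≤ (j : ℕ) → w j ≤ B) (hF : 0 ≤ F)
    (hLU : ∀ i : Fin N, (i : ℕ) < Nin → -F ≤ diffOp c U i)
    (hU0 : ∀ j : Fin N, Nin ≤ (j : ℕ) → U j = 0) (i : Fin N) :
    U i ≤ B * F := by
  have hsub : ∀ i : Fin N, (i : ℕ) < Nin → 0 ≤ diffOp c (U + F • w) i := fun i hi => by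
    rw [diffOp_add, diffOp_smul]
    linarith [hLU i hi, le_mul_of_one_le_right hF (hLw i hi)]
  obtain ⟨j, hj, hmax⟩ := exists_boundary_isMax hc hconn hsub
  calc U i ≤ U i + F * w i := le_add_of_nonneg_right (mul_nonneg hF (hw i))
    _ ≤ U j + F * w j := hmax i
    _ = F * w j := by rw [hU0 j hj, zero_add]
    _ ≤ B * F := by rw [mul_comm B]; exact mul_le_mul_of_nonneg_left (hwB j hj) hF

end MaximumPrinciple

theorem cSPH_nonneg {d N : ℕ} {σ h : ℝ} {P : ℝ → ℝ} {x : Fin N → Ed d} {a : Fin N → ℝ}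
    {V : Fin N → Fin N → ℝ} (hσ : 0 < σ) (hh : 0 < h)
    (hdec : ∀ R : ℝ, 0 ≤ R → deriv P R ≤ 0) (ha : ∀ i, 0 < a i) {i j : Fin N}
    (hV : 0 ≤ V i j) : 0 ≤ cSPH d N σ h P x a V i j := by
  set v := x i - x j
  have hradial : (σ / h ^ (d + 1)) * deriv P (‖v‖ / h) / ‖v‖ ≤ 0 :=
    div_nonpos_of_nonpos_of_nonneg
      (mul_nonpos_of_nonneg_of_nonpos (by positivity) (hdec _ (by positivity)))
      (norm_nonneg v)
  have hinner : ⟪v, gradW d σ h P v⟫ ≤ 0 := by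
    rw [gradW, real_inner_smul_right]
    exact mul_nonpos_of_nonpos_of_nonneg hradial real_inner_self_nonneg
  have hsum : 0 ≤ a i + a j := (add_pos (ha i) (ha j)).le
  rw [cSPH, neg_nonneg]
  exact mul_nonpos_of_nonneg_of_nonpos hV
    (mul_nonpos_of_nonneg_of_nonpos hsum (div_nonpos_of_nonpos_of_nonneg hinner (by positivity)))

theorem le_csSup_setOf_exists_eq {ι : Type*} [Finite ι] {p : ι → Prop} {g : ι → ℝ} {j : ι}
    (hj : p j) : g j ≤ sSup {y : ℝ | ∃ k, p k ∧ y = g k} :=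
  le_csSup ((Set.finite_range g).subset (by rintro _ ⟨k, -, rfl⟩; exact ⟨k, rfl⟩)).bddAbove
    ⟨j, hj, rfl⟩

theorem stmt_9_general
    (d N Nin : ℕ)
    (σ h : ℝ) (hσ : 0 < σ) (hh : 0 < h)
    (P : ℝ → ℝ)
    (hdec : ∀ R : ℝ, 0 ≤ R → deriv P R ≤ 0)
    (x : Fin N → Ed d)
    (a : Fin N → ℝ) (ha : ∀ i, 0 < a i)
    (V : Fin N → Fin N → ℝ)
    (hV : ∀ i j : Fin N, (i : ℕ) < Nin → j ≠ i → 0 ≤ V i j)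
    (hconn : ConnBd Nin (cSPH d N σ h P x a V))
    (w : Fin N → ℝ) (hw : ∀ i, 0 ≤ w i)
    (hLw : ∀ i : Fin N, (i : ℕ) < Nin → 1 ≤ Lh d N σ h P x a V w i)
    (f U : Fin N → ℝ)
    (hU : ∀ i : Fin N, (i : ℕ) < Nin → Lh d N σ h P x a V U i = f i)
    (hU0 : ∀ i : Fin N, Nin ≤ (i : ℕ) → U i = 0) :
    ∀ i : Fin N, |U i| ≤
      sSup {y : ℝ | ∃ j : Fin N, Nin ≤ (j : ℕ) ∧ y = w j} *
        sSup {y : ℝ | ∃ j : Fin N, (j : ℕ) < Nin ∧ y = |f j|} := by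
  intro i
  have : Nonempty (Fin N) := ⟨i⟩
  set B := sSup {y : ℝ | ∃ j : Fin N, Nin ≤ (j : ℕ) ∧ y = w j}
  set F := sSup {y : ℝ | ∃ j : Fin N, (j : ℕ) < Nin ∧ y = |f j|}
  have hc : ∀ j k : Fin N, (j : ℕ) < Nin → k ≠ j → 0 ≤ cSPH d N σ h P x a V j k :=
    fun j k hj hkj => cSPH_nonneg hσ hh hdec ha (hV j k hj hkj)
  have hwB (j : Fin N) (hj : Nin ≤ (j : ℕ)) : w j ≤ B := le_csSup_setOf_exists_eq hj
  have hfF (j : Fin N) (hj : (j : ℕ) < Nin) : |f j| ≤ F :=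
    le_csSup_setOf_exists_eq (g := fun k => |f k|) hj
  have hF : 0 ≤ F := Real.sSup_nonneg (by rintro _ ⟨j, -, rfl⟩; exact abs_nonneg _)
  refine abs_le.2 ⟨neg_le.1 ?_, ?_⟩
  · refine le_mul_of_barrier (U := -U) hc hconn hw hLw hwB hF (fun j hj => ?_) (by simpa using hU0) i
    rw [diffOp_neg, neg_le_neg_iff, ← Lh_eq_diffOp, hU j hj]
    exact (abs_le.1 (hfF j hj)).2
  · refine le_mul_of_barrier hc hconn hw hLw hwB hF (fun j hj => ?_) hU0 i
    rw [← Lh_eq_diffOp, hU j hj]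
    exact (abs_le.1 (hfF j hj)).1

/-- Barrier comparison: if `w ≥ 0` with `ℒ_h w ≥ 1` at interior
indices, and `ℒ_h U = f` at interior indices with `U = 0` on the boundary,
then `max |U| ≤ (max_boundary w)·(max_interior |f|)`. -/
theorem stmt_9
    (d N Nin : ℕ) (hd : 1 ≤ d) (hNin0 : 0 < Nin) (hNinN : Nin < N)
    (l σ h : ℝ) (hl : 0 < l) (hσ : 0 < σ) (hh : 0 < h)
    (P : ℝ → ℝ) (hP : ContDiff ℝ 1 P)
    (hPnn : ∀ R : ℝ, 0 ≤ R → 0 ≤ P R)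
    (hPsupp : ∀ R : ℝ, 1 ≤ R → P R = 0)
    (hdec : ∀ R : ℝ, 0 ≤ R → deriv P R ≤ 0)
    (x : Fin N → Ed d) (hxinj : Function.Injective x)
    (hxΩ : ∀ i, x i ∈ cube d l)
    (hint : ∀ i : Fin N, (i : ℕ) < Nin → x i ∈ interior (cube d l))
    (hbd : ∀ i : Fin N, Nin ≤ (i : ℕ) → x i ∈ frontier (cube d l))
    (a : Fin N → ℝ) (ha : ∀ i, 0 < a i)
    (V : Fin N → Fin N → ℝ)
    (hV : ∀ i j : Fin N, (i : ℕ) < Nin → j ≠ i → 0 ≤ V i j)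
    (hconn : ConnBd Nin (cSPH d N σ h P x a V))
    (w : Fin N → ℝ) (hw : ∀ i, 0 ≤ w i)
    (hLw : ∀ i : Fin N, (i : ℕ) < Nin → 1 ≤ Lh d N σ h P x a V w i)
    (f U : Fin N → ℝ)
    (hU : ∀ i : Fin N, (i : ℕ) < Nin → Lh d N σ h P x a V U i = f i)
    (hU0 : ∀ i : Fin N, Nin ≤ (i : ℕ) → U i = 0) :
    ∀ i : Fin N, |U i| ≤
      sSup {y : ℝ | ∃ j : Fin N, Nin ≤ (j : ℕ) ∧ y = w j} *
        sSup {y : ℝ | ∃ j : Fin N, (j : ℕ) < Nin ∧ y = |f j|} :=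
  stmt_9_general d N Nin σ h hσ hh P hdec x a ha V hV hconn w hw hLw f U hU hU0
end
end
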